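/- Let K be a field, d ≥ 3, and let m : Fin d → ℕ with m i ≥ 1 for all i. Let φ be a K-linear map from the space of tensors of format (m 1, …, m d) to the space of l × m' matrices over K. Suppose that for every decomposable tensor S one has rank(φ(S)) ≤ r. Then for every tensor T of format (m 1, …, m d), rank(φ(T)) ≤ r · R̲(T), where R̲(T) is the border rank of T. -/

import Mathlib

noncomputable section

open scoped BigOperators
open Matrix Module

variable {K : Type*} [Field K]

/- === auxiliary lemmas (verified already) === -/
lemma myrank_add_le {p q : Type*} [Fintype p] [Fintype q] (A B : Matrix p q K) :
    (A + B).rank ≤ A.rank + B.rank := by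
  classical
  rw [Matrix.rank, Matrix.mulVecLin_add]
  refine le_trans (Submodule.finrank_mono ?_)
    (Submodule.finrank_add_le_finrank_add_finrank _ _)
  rintro x ⟨y, rfl⟩
  exact Submodule.add_mem_sup (LinearMap.mem_range_self _ y) (LinearMap.mem_range_self _ y)

lemma myrank_sum_le {p q ι : Type*} [Fintype p] [Fintype q] (s : Finset ι)
    (A : ι → Matrix p q K) : (∑ j ∈ s, A j).rank ≤ ∑ j ∈ s, (A j).rank := by
  classical
  induction s using Finset.cons_induction with
  | empty => simp
  | cons a s ha ih =>
      rw [Finset.sum_cons, Finset.sum_cons]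
      exact (myrank_add_le _ _).trans (by gcongr)

lemma myrank_submatrix_le {l m' s : ℕ} (M : Matrix (Fin l) (Fin m') K)
    (u : Fin s → Fin l) (w : Fin s → Fin m') : (M.submatrix u w).rank ≤ M.rank := by
  classical
  let P : Matrix (Fin s) (Fin l) K := Matrix.of fun i a => if a = u i then 1 else 0
  let Q : Matrix (Fin m') (Fin s) K := Matrix.of fun b j => if b = w j then 1 else 0
  have hPQ : P * M * Q = M.submatrix u w := by
    ext i j
    simp [P, Q, Matrix.mul_apply, Finset.sum_ite_eq, ite_mul, mul_ite]
  calc (M.submatrix u w).rank = (P * M * Q).rank := by rw [hPQ]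
    _ ≤ (P * M).rank := Matrix.rank_mul_le_left _ _
    _ ≤ M.rank := Matrix.rank_mul_le_right _ _

lemma mydet_eq_zero_of_rank_lt {s : ℕ} (Q : Matrix (Fin s) (Fin s) K) (h : Q.rank < s) :
    Q.det = 0 := by
  by_contra hd
  have hu : IsUnit Q := (Matrix.isUnit_iff_isUnit_det Q).2 (isUnit_iff_ne_zero.2 hd)
  have := Q.rank_of_isUnit hu
  simp [this] at h

lemma myexists_li {ι V : Type*} [AddCommGroup V] [Module K V] [FiniteDimensional K V]
    {v : ι → V} {k : ℕ} (h : k ≤ finrank K (Submodule.span K (Set.range v))) :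
    ∃ f : Fin k → ι, LinearIndependent K (v ∘ f) := by
  classical
  obtain ⟨b, hbs, hspan, hli⟩ := exists_linearIndependent K (Set.range v)
  have hbf : b.Finite := hli.setFinite
  haveI := hbf.fintype
  have hcard : Fintype.card b = finrank K (Submodule.span K b) := by
    have := linearIndependent_iff_card_eq_finrank_span.mp hli
    rwa [Set.finrank, Subtype.range_coe] at this
  have hk : Fintype.card (Fin k) ≤ Fintype.card b := by
    rw [Fintype.card_fin, hcard, hspan]; exact h
  obtain ⟨e⟩ := Function.Embedding.nonempty_of_card_le hk
  have hchoice : ∀ j : Fin k, ∃ i : ι, v i = (e j : V) := fun j => hbs (e j).2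
  choose f hf using hchoice
  refine ⟨f, ?_⟩
  have : v ∘ f = fun j => ((e j : b) : V) := funext fun j => hf j
  rw [this]
  exact hli.comp e e.injective

lemma myrank_le_of_minors {l m' k : ℕ} (M : Matrix (Fin l) (Fin m') K)
    (h : ∀ (u : Fin (k+1) → Fin l) (w : Fin (k+1) → Fin m'),
      (M.submatrix u w).det = 0) : M.rank ≤ k := by
  by_contra hk
  push_neg at hk
  have h1 : k + 1 ≤ finrank K (Submodule.span K (Set.range Mᵀ)) := by
    change k + 1 ≤ finrank K (Submodule.span K (Set.range M.col))
    rw [← Matrix.rank_eq_finrank_span_cols]; omega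
  obtain ⟨c, hc⟩ := myexists_li h1
  set N : Matrix (Fin l) (Fin (k+1)) K := M.submatrix id c with hN
  have hrankNT : Nᵀ.rank = k + 1 := by
    have := (show LinearIndependent K Nᵀ.row from hc).rank_matrix
    simpa using this
  have h2 : k + 1 ≤ finrank K (Submodule.span K (Set.range N)) := by
    change k + 1 ≤ finrank K (Submodule.span K (Set.range N.row))
    rw [← Matrix.rank_eq_finrank_span_row, ← Matrix.rank_transpose, hrankNT]
  obtain ⟨u, hu⟩ := myexists_li h2
  have hrows : LinearIndependent K (fun j => M.submatrix u c j) := hu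
  have hun : IsUnit (M.submatrix u c) := Matrix.linearIndependent_rows_iff_isUnit.mp hrows
  have hdet := (Matrix.isUnit_iff_isUnit_det _).1 hun
  rw [h u c] at hdet
  exact hdet.ne_zero rfl

/- === statement-pinned definitions === -/

/-- A tensor of format `(m 0, …, m (d-1))` is decomposable if it is an outer product
of vectors. -/
def Tensor.Decomposable {d : ℕ} {m : Fin d → ℕ} (T : (∀ i, Fin (m i)) → K) : Prop :=
  ∃ v : ∀ i, Fin (m i) → K, ∀ f, T f = ∏ i, v i (f i)

/-- The tensor rank: the least `r` such that `T` is a sum of `r` decomposable tensors. -/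
def Tensor.rank {d : ℕ} {m : Fin d → ℕ} (T : (∀ i, Fin (m i)) → K) : ℕ :=
  sInf {r | ∃ c : Fin r → ((∀ i, Fin (m i)) → K),
    (∀ j, Tensor.Decomposable (c j)) ∧ T = ∑ j, c j}

/-- Zariski closure of a set of tensors: common zeros of all polynomials vanishing on it. -/
def Tensor.zariskiClosure {d : ℕ} {m : Fin d → ℕ} (A : Set ((∀ i, Fin (m i)) → K)) :
    Set ((∀ i, Fin (m i)) → K) :=
  {T | ∀ P : MvPolynomial (∀ i, Fin (m i)) K,
    (∀ S ∈ A, MvPolynomial.eval S P = 0) → MvPolynomial.eval T P = 0}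

/-- The border rank: least `r` with `T` in the Zariski closure of tensors of rank `≤ r`. -/
def Tensor.borderRank {d : ℕ} {m : Fin d → ℕ} (T : (∀ i, Fin (m i)) → K) : ℕ :=
  sInf {r | T ∈ Tensor.zariskiClosure {S | Tensor.rank S ≤ r}}

/- === more auxiliary lemmas === -/

lemma decomp_nonempty {d : ℕ} (hd : 0 < d) {m : Fin d → ℕ}
    (S : (∀ i, Fin (m i)) → K) :
    {r | ∃ c : Fin r → ((∀ i, Fin (m i)) → K),
      (∀ j, Tensor.Decomposable (c j)) ∧ S = ∑ j, c j}.Nonempty := by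
  classical
  let ι := ∀ i, Fin (m i)
  let e : Fin (Fintype.card ι) ≃ ι := (Fintype.equivFin ι).symm
  let i0 : Fin d := ⟨0, hd⟩
  refine ⟨Fintype.card ι, fun j g => S (e j) * ∏ i, (if g i = e j i then (1:K) else 0), ?_, ?_⟩
  · intro j
    refine ⟨fun i x => (if i = i0 then S (e j) else 1) * (if x = e j i then 1 else 0), ?_⟩
    intro g
    rw [Finset.prod_mul_distrib]
    have h1 : ∏ i, (if i = i0 then S (e j) else 1) = S (e j) := by
      rw [Finset.prod_eq_single i0] <;> simp +contextual
    rw [h1]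
  · ext g
    rw [Finset.sum_apply]
    have : ∀ j : Fin (Fintype.card ι),
        S (e j) * ∏ i, (if g i = e j i then (1:K) else 0)
          = if e.symm g = j then S g else 0 := by
      intro j
      by_cases hgj : g = e j
      · subst hgj; simp
      · have h1 : ∏ i, (if g i = e j i then (1:K) else 0) = 0 := by
          have : ∃ i, g i ≠ e j i := by
            by_contra hc
            push_neg at hc
            exact hgj (funext hc)
          obtain ⟨i, hi⟩ := this
          exact Finset.prod_eq_zero (Finset.mem_univ i) (by simp [hi])
        have h2 : e.symm g ≠ j := fun hh => hgj (by rw [← hh]; simp)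
        simp [h1, h2]
    rw [Finset.sum_congr rfl (fun j _ => this j), Finset.sum_ite_eq Finset.univ (e.symm g)]
    simp

lemma entry_poly {ι : Type*} [Fintype ι] [DecidableEq ι] (ψ : (ι → K) →ₗ[K] K) (T : ι → K) :
    MvPolynomial.eval T (∑ f : ι, MvPolynomial.C (ψ (Pi.single f 1)) * MvPolynomial.X f)
      = ψ T := by
  have hT : T = ∑ f : ι, T f • (Pi.single f 1 : ι → K) := by
    ext g
    rw [Finset.sum_apply]
    simp [Pi.single_apply, Finset.sum_ite_eq Finset.univ g]
  calc MvPolynomial.eval T (∑ f : ι, MvPolynomial.C (ψ (Pi.single f 1)) * MvPolynomial.X f)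
      = ∑ f : ι, ψ (Pi.single f 1) * T f := by simp
    _ = ψ T := by
        conv_rhs => rw [hT]
        rw [map_sum]
        simp [mul_comm]

/- === main theorem === -/

/-- **Rank method for border rank.** If a linear map `φ` from tensors of
format `(m 0, …, m (d-1))` to `l × m'` matrices satisfies `rank (φ S) ≤ r` for every
decomposable tensor `S`, then `rank (φ T) ≤ r * R̲(T)` for every tensor `T`. -/
theorem rank_method_border (K : Type*) [Field K] (d : ℕ) (hd : 3 ≤ d) (m : Fin d → ℕ)
    (hm : ∀ i, 1 ≤ m i) (l m' r : ℕ)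
    (φ : ((∀ i, Fin (m i)) → K) →ₗ[K] Matrix (Fin l) (Fin m') K)
    (hφ : ∀ S : (∀ i, Fin (m i)) → K, Tensor.Decomposable S → (φ S).rank ≤ r)
    (T : (∀ i, Fin (m i)) → K) :
    (φ T).rank ≤ r * Tensor.borderRank T := by
  classical
  set B := Tensor.borderRank T with hBdef
  -- T lies in the Zariski closure of tensors of rank ≤ B
  have hmem : T ∈ Tensor.zariskiClosure {S : (∀ i, Fin (m i)) → K | Tensor.rank S ≤ B} := by
    have hne : {r | T ∈ Tensor.zariskiClosure
        {S : (∀ i, Fin (m i)) → K | Tensor.rank S ≤ r}}.Nonempty :=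
      ⟨Tensor.rank T, fun P hP => hP T (show Tensor.rank T ≤ Tensor.rank T from le_rfl)⟩
    exact Nat.sInf_mem hne
  -- any tensor of rank ≤ B maps to a matrix of rank ≤ r * B
  have key : ∀ S : (∀ i, Fin (m i)) → K, Tensor.rank S ≤ B → (φ S).rank ≤ r * B := by
    intro S hS
    obtain ⟨c, hdec, hsum⟩ :=
      Nat.sInf_mem (decomp_nonempty (show 0 < d by omega) S)
    calc (φ S).rank = (∑ j, φ (c j)).rank := by rw [congrArg φ hsum, map_sum]
      _ ≤ ∑ j : Fin (Tensor.rank S), (φ (c j)).rank := myrank_sum_le _ _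
      _ ≤ ∑ _j : Fin (Tensor.rank S), r := Finset.sum_le_sum fun j _ => hφ _ (hdec j)
      _ = Tensor.rank S * r := by simp [mul_comm]
      _ ≤ r * B := by rw [mul_comm]; exact Nat.mul_le_mul_left r hS
  -- all (r*B+1)-minors of φ T vanish, via the polynomial argument
  apply myrank_le_of_minors
  intro u w
  -- the linear entries as polynomials
  let L : Fin l → Fin m' → MvPolynomial (∀ i, Fin (m i)) K := fun a b =>
    ∑ f : (∀ i, Fin (m i)), MvPolynomial.C (φ (Pi.single f 1) a b) * MvPolynomial.X f
  have hLeval : ∀ (S : (∀ i, Fin (m i)) → K) (a : Fin l) (b : Fin m'),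
      MvPolynomial.eval S (L a b) = φ S a b := by
    intro S a b
    let ψ : ((∀ i, Fin (m i)) → K) →ₗ[K] K :=
      { toFun := fun S => φ S a b
        map_add' := fun x y => by simp
        map_smul' := fun t x => by simp }
    exact entry_poly ψ S
  let P : MvPolynomial (∀ i, Fin (m i)) K :=
    (Matrix.of fun i j => L (u i) (w j)).det
  have hPeval : ∀ S : (∀ i, Fin (m i)) → K,
      MvPolynomial.eval S P = ((φ S).submatrix u w).det := by
    intro S
    show (MvPolynomial.eval S : MvPolynomial _ K →+* K) (Matrix.of fun i j => L (u i) (w j)).det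
      = ((φ S).submatrix u w).det
    rw [RingHom.map_det]
    congr 1
    ext i j
    exact hLeval S (u i) (w j)
  have hvanish : MvPolynomial.eval T P = 0 := by
    apply hmem
    intro S hS
    rw [hPeval S]
    exact mydet_eq_zero_of_rank_lt _
      (lt_of_le_of_lt ((myrank_submatrix_le _ _ _).trans (key S hS)) (Nat.lt_succ_self _))
  rw [← hPeval T] at *
  exact hvanish

end
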